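/- arXiv:2305.17658 — 2 statements merged into one kernel-verified Lean document; each statement's English description precedes it below -/
import Mathlib

section
/- Let W be a finite-dimensional complex vector space with dim_ℂ W ≥ 2, and let φ : W → W* be a ℂ-linear map into the dual space W* = Hom_ℂ(W, ℂ) that is symmetric, i.e. (φ(w₁))(w₂) = (φ(w₂))(w₁) for all w₁, w₂ ∈ W. If φ(w₁) ⊗ w₂ = φ(w₂) ⊗ w₁ holds in W* ⊗_ℂ W for all w₁, w₂ ∈ W, then φ = 0. (Equivalently, the linear map sending a symmetric homomorphism φ ∈ Hom^s(W, W*) to the homomorphism Φ : ⋀²W → W* ⊗ W, Φ(w₁ ∧ w₂) = φ(w₁) ⊗ w₂ − φ(w₂) ⊗ w₁, is injective; this is the linear-algebra content of the statement that the natural homomorphism from the space of infinitesimal deformations of a polarized abelian variety of dimension n ≥ 2 to its (2,0)-infinitesimal variation of Hodge structure is injective.) -/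
open TensorProduct

/-!
Apply to `φ w₂ ⊗ w₁ = φ w₁ ⊗ w₂` a functional on the second factor that kills `w₁` but not `w₂`:
this gives `f w₂ • φ w₁ = 0`, and such a pair `w₂ ∉ ℂ ∙ w₁` exists for every `w₁` once `dim W ≥ 2`.
-/

theorem Submodule.exists_notMem_span_singleton_of_one_lt_finrank {K V : Type*} [DivisionRing K]
    [AddCommGroup V] [Module K V] (h : 1 < Module.finrank K V) (w : V) :
    ∃ v, v ∉ K ∙ w := by
  by_contra! hall
  have htop : (K ∙ w) = ⊤ := eq_top_iff.mpr fun v _ => hall v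
  have hle : Module.finrank K (K ∙ w) ≤ 1 := by
    simpa using finrank_span_le_card ({w} : Set V)
  rw [htop, finrank_top] at hle
  omega

theorem TensorProduct.eq_zero_of_tmul_eq_tmul_of_notMem_span {K M V : Type*} [Field K]
    [AddCommGroup M] [Module K M] [AddCommGroup V] [Module K V] {x y : M} {v w : V}
    (hw : w ∉ K ∙ v) (h : x ⊗ₜ[K] v = y ⊗ₜ[K] w) : y = 0 := by
  obtain ⟨f, hfw, hfv⟩ := Submodule.exists_dual_map_eq_bot_of_notMem hw inferInstance
  have hfv : f v = 0 := by
    simpa [Submodule.map_span] using hfv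
  have := congrArg ((TensorProduct.rid K M).toLinearMap ∘ₗ LinearMap.lTensor M f) h
  simp only [LinearMap.comp_apply, LinearMap.lTensor_tmul, LinearEquiv.coe_coe, rid_tmul, hfv,
    zero_smul] at this
  exact (smul_eq_zero.mp this.symm).resolve_left hfw

theorem symmetric_hom_eq_zero_of_tensor_symm_general
    (W : Type*) [AddCommGroup W] [Module ℂ W]
    (hdim : 2 ≤ Module.finrank ℂ W)
    (φ : W →ₗ[ℂ] Module.Dual ℂ W)
    (h : ∀ w₁ w₂ : W,
      (φ w₁ ⊗ₜ[ℂ] w₂ : Module.Dual ℂ W ⊗[ℂ] W) = φ w₂ ⊗ₜ[ℂ] w₁) :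
    φ = 0 := by
  ext w₁
  obtain ⟨w₂, hw₂⟩ := Submodule.exists_notMem_span_singleton_of_one_lt_finrank hdim w₁
  simp [eq_zero_of_tmul_eq_tmul_of_notMem_span hw₂ (h w₁ w₂).symm]

/-- If `φ : W → W*` is a symmetric linear map on a finite-dimensional complex vector
space of dimension at least `2`, and `φ w₁ ⊗ w₂ = φ w₂ ⊗ w₁` in `W* ⊗ W` for all
`w₁, w₂`, then `φ = 0`. -/
theorem symmetric_hom_eq_zero_of_tensor_symm
    (W : Type*) [AddCommGroup W] [Module ℂ W] [FiniteDimensional ℂ W]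
    (hdim : 2 ≤ Module.finrank ℂ W)
    (φ : W →ₗ[ℂ] Module.Dual ℂ W)
    (hsym : ∀ w₁ w₂ : W, φ w₁ w₂ = φ w₂ w₁)
    (h : ∀ w₁ w₂ : W,
      (φ w₁ ⊗ₜ[ℂ] w₂ : Module.Dual ℂ W ⊗[ℂ] W) = φ w₂ ⊗ₜ[ℂ] w₁) :
    φ = 0 :=
  symmetric_hom_eq_zero_of_tensor_symm_general W hdim φ h
end

section
/- Let φ be a ℂ-linear functional on the space Sym⁴(V) of homogeneous quartic polynomials in x₀, x₁, x₂, x₃, and for each homogeneous quadratic polynomial q let φ_q denote the linear functional on the space Sym²(V) of homogeneous quadratic polynomials defined by φ_q(q') = φ(q·q'). If φ_{q₁} ⊗ q₂ = φ_{q₂} ⊗ q₁ holds in Sym²(V)* ⊗_ℂ Sym²(V) for all homogeneous quadratics q₁, q₂, then φ = 0. (This is the injectivity of the contraction homomorphism τ : Sym⁴(V)* → Hom(⋀²Sym²(V), Sym²(V)* ⊗ Sym²(V)), τ(φ)(q₁ ∧ q₂) = φ_{q₁} ⊗ q₂ − φ_{q₂} ⊗ q₁, which computes the (2,0)-infinitesimal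 variation of Hodge structure of the polarized Albanese variety in terms of the infinitesimal deformation.) -/
/-!
Pairing the second tensor factor of `φ_{q₁} ⊗ q₂ = φ_{q₂} ⊗ q₁` with a functional `f` gives
`f q₂ • φ_{q₁} = f q₁ • φ_{q₂}`. Since `dim Sym²(V) > 1`, every `q₁ ≠ 0` has a `q₂` outside its
span and an `f` killing `q₁` but not `q₂`, so `φ_{q₁} = 0`. Thus `φ` vanishes on all products of
two quadratics, and these span `Sym⁴(V)`.
-/

open TensorProduct

/-- `Sym²(V)`: the homogeneous quadratic polynomials in four variables. -/
noncomputable abbrev Sym2V : Submodule ℂ (MvPolynomial (Fin 4) ℂ) :=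
  MvPolynomial.homogeneousSubmodule (Fin 4) ℂ 2

/-- `Sym⁴(V)`: the homogeneous quartic polynomials in four variables. -/
noncomputable abbrev Sym4V : Submodule ℂ (MvPolynomial (Fin 4) ℂ) :=
  MvPolynomial.homogeneousSubmodule (Fin 4) ℂ 4

lemma mul_mem_Sym4V (q q' : Sym2V) : (q : MvPolynomial (Fin 4) ℂ) * q' ∈ Sym4V :=
  (MvPolynomial.mem_homogeneousSubmodule 4 _).mpr
    (((MvPolynomial.mem_homogeneousSubmodule 2 _).mp q.2).mul
      ((MvPolynomial.mem_homogeneousSubmodule 2 _).mp q'.2))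

/-- For `φ ∈ Sym⁴(V)*` and a homogeneous quadratic `q`, the linear functional
`φ_q ∈ Sym²(V)*` defined by `φ_q (q') = φ (q * q')`. -/
noncomputable def contrFunctional (φ : Module.Dual ℂ Sym4V) (q : Sym2V) :
    Module.Dual ℂ Sym2V where
  toFun q' := φ ⟨(q : MvPolynomial (Fin 4) ℂ) * q', mul_mem_Sym4V q q'⟩
  map_add' a b := by
    rw [← map_add]
    exact congrArg φ (Subtype.ext (mul_add _ _ _))
  map_smul' c a := by
    rw [RingHom.id_apply, ← map_smul]
    exact congrArg φ (Subtype.ext (mul_smul_comm c _ _))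

theorem LinearMap.eq_zero_of_tmul_comm {K V W : Type*} [Field K] [AddCommGroup V] [Module K V]
    [AddCommGroup W] [Module K W] (hV : 1 < Module.rank K V) (L : V →ₗ[K] W)
    (h : ∀ v₁ v₂, L v₁ ⊗ₜ[K] v₂ = L v₂ ⊗ₜ[K] v₁) : L = 0 := by
  ext v
  rcases eq_or_ne v 0 with rfl | hv
  · simp
  obtain ⟨w, hvw⟩ := exists_linearIndependent_pair_of_one_lt_rank hV hv
  have hw : w ∉ K ∙ v := by
    simpa [Submodule.mem_span_singleton] using (LinearIndependent.pair_iff' hv).mp hvw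
  obtain ⟨f, hfw, hfv⟩ := Submodule.exists_dual_map_eq_bot_of_notMem hw inferInstance
  have hfv : f v = 0 := (Submodule.eq_bot_iff _).mp hfv _
    (Submodule.mem_map_of_mem (Submodule.mem_span_singleton_self v))
  have hpair := congrArg ((TensorProduct.rid K W).toLinearMap ∘ₗ LinearMap.lTensor W f) (h v w)
  simp only [LinearMap.comp_apply, LinearMap.lTensor_tmul, LinearEquiv.coe_coe,
    TensorProduct.rid_tmul, hfv, zero_smul] at hpair
  exact (smul_eq_zero.mp hpair).resolve_left hfw

namespace MvPolynomial

theorem homogeneousSubmodule_mul_eq {σ R : Type*} [CommSemiring R] (m n : ℕ) :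
    homogeneousSubmodule σ R m * homogeneousSubmodule σ R n =
      homogeneousSubmodule σ R (m + n) := by
  rw [← homogeneousSubmodule_one_pow R m, ← homogeneousSubmodule_one_pow R n,
    ← homogeneousSubmodule_one_pow R (m + n), pow_add]

theorem one_lt_rank_homogeneousSubmodule {σ K : Type*} [Field K] [Nontrivial σ] {n : ℕ}
    (hn : n ≠ 0) : 1 < Module.rank K (homogeneousSubmodule σ K n) := by
  obtain ⟨i, j, hij⟩ := exists_pair_ne σ
  let v : Fin 2 → homogeneousSubmodule σ K n :=
    ![⟨X i ^ n, isHomogeneous_X_pow i n⟩, ⟨X j ^ n, isHomogeneous_X_pow j n⟩]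
  have hv : LinearIndependent K v := by
    refine LinearIndependent.of_comp (homogeneousSubmodule σ K n).subtype ?_
    have hinj : Function.Injective ![Finsupp.single i n, Finsupp.single j n] := by
      intro a b hab
      fin_cases a <;> fin_cases b <;> simp_all [Finsupp.single_left_inj hn, eq_comm]
    have hmon : (homogeneousSubmodule σ K n).subtype ∘ v =
        basisMonomials σ K ∘ ![Finsupp.single i n, Finsupp.single j n] := by
      ext k : 1
      fin_cases k <;> simp [v, X_pow_eq_monomial]
    rw [hmon]
    exact (basisMonomials σ K).linearIndependent.comp _ hinj
  exact lt_of_lt_of_le (by norm_num) (Module.le_rank_iff.mpr ⟨v, hv⟩)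

end MvPolynomial

noncomputable def contrLinearMap (φ : Module.Dual ℂ Sym4V) :
    Sym2V →ₗ[ℂ] Module.Dual ℂ Sym2V where
  toFun := contrFunctional φ
  map_add' a b := by
    ext q'
    exact (congrArg φ (Subtype.ext (add_mul _ _ _))).trans (map_add φ _ _)
  map_smul' c a := by
    ext q'
    exact (congrArg φ (Subtype.ext (smul_mul_assoc c _ _))).trans (map_smul φ c _)

/-- If `φ ∈ Sym⁴(V)*` satisfies `φ_{q₁} ⊗ q₂ = φ_{q₂} ⊗ q₁` in `Sym²(V)* ⊗ Sym²(V)`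
for all homogeneous quadratics `q₁, q₂`, then `φ = 0`; this is the injectivity of the
contraction homomorphism `τ : Sym⁴(V)* → Hom(⋀²Sym²(V), Sym²(V)* ⊗ Sym²(V))`. -/
theorem contraction_injective
    (φ : Module.Dual ℂ Sym4V)
    (h : ∀ q₁ q₂ : Sym2V,
      (contrFunctional φ q₁ ⊗ₜ[ℂ] q₂ : Module.Dual ℂ Sym2V ⊗[ℂ] Sym2V) =
        contrFunctional φ q₂ ⊗ₜ[ℂ] q₁) :
    φ = 0 := by
  have hcontr : contrLinearMap φ = 0 :=
    LinearMap.eq_zero_of_tmul_comm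
      (MvPolynomial.one_lt_rank_homogeneousSubmodule two_ne_zero) _ h
  have hprod : Sym2V * Sym2V ≤ (LinearMap.ker φ).map Sym4V.subtype :=
    Submodule.mul_le.mpr fun q hq q' hq' =>
      ⟨_, LinearMap.congr_fun (LinearMap.congr_fun hcontr ⟨q, hq⟩) ⟨q', hq'⟩, rfl⟩
  ext p
  have hp : (p : MvPolynomial (Fin 4) ℂ) ∈ Sym2V * Sym2V := by
    rw [MvPolynomial.homogeneousSubmodule_mul_eq]
    exact p.2
  obtain ⟨p', hp', hp'p⟩ := hprod hp
  rw [← Subtype.ext hp'p]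
  exact hp'
end
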